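/- Let X be a strongly star-Lindelöf space that is a union of fewer than 𝔡 Hurewicz subspaces. Then X is strongly star-Scheepers. -/

import Mathlib

open Set

/-- The dominating number 𝔡: least cardinality of a dominating family in ℕ^ℕ. -/
noncomputable def dominatingNumber : Cardinal :=
  sInf { c | ∃ D : Set (ℕ → ℕ),
    (∀ g : ℕ → ℕ, ∃ f ∈ D, ∀ᶠ n in Filter.atTop, g n ≤ f n) ∧ c = Cardinal.mk D }

/-- `U` is an open cover of the space `X`. -/
def IsOpenCover {X : Type*} [TopologicalSpace X] (U : Set (Set X)) : Prop :=
  (∀ u ∈ U, IsOpen u) ∧ ⋃₀ U = Set.univ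

/-- The star of a set `A` with respect to a family `U`. -/
def starOf {X : Type*} (A : Set X) (U : Set (Set X)) : Set X :=
  ⋃₀ {B | B ∈ U ∧ (A ∩ B).Nonempty}

/-- The star-Scheepers property (ω-cover form). -/
def StarScheepers (X : Type*) [TopologicalSpace X] : Prop :=
  ∀ U : ℕ → Set (Set X), (∀ n, IsOpenCover (U n)) →
    ∃ V : ℕ → Set (Set X), (∀ n, V n ⊆ U n ∧ (V n).Finite) ∧
      ∀ F : Set X, F.Finite → ∃ n, F ⊆ starOf (⋃₀ V n) (U n)

/-- The strongly star-Scheepers property. -/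
def StronglyStarScheepers (X : Type*) [TopologicalSpace X] : Prop :=
  ∀ U : ℕ → Set (Set X), (∀ n, IsOpenCover (U n)) →
    ∃ F : ℕ → Set X, (∀ n, (F n).Finite) ∧
      ∀ G : Set X, G.Finite → ∃ n, G ⊆ starOf (F n) (U n)

/-- The Hurewicz property. -/
def Hurewicz (X : Type*) [TopologicalSpace X] : Prop :=
  ∀ U : ℕ → Set (Set X), (∀ n, IsOpenCover (U n)) →
    ∃ V : ℕ → Set (Set X), (∀ n, V n ⊆ U n ∧ (V n).Finite) ∧
      ∀ x : X, ∀ᶠ n in Filter.atTop, x ∈ ⋃₀ V n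

universe v

lemma starOf_mono {X : Type*} {A B : Set X} (h : A ⊆ B) (U : Set (Set X)) :
    starOf A U ⊆ starOf B U := by
  rintro x ⟨s, ⟨hsU, a, haA, haB⟩, hxs⟩
  exact ⟨s, ⟨hsU, a, h haA, haB⟩, hxs⟩

lemma dominating_uncountable (D : Set (ℕ → ℕ))
    (hD : ∀ g : ℕ → ℕ, ∃ f ∈ D, ∀ᶠ n in Filter.atTop, g n ≤ f n) :
    ¬ D.Countable := by
  intro hc
  have hne : D.Nonempty := by
    obtain ⟨f, hf, _⟩ := hD 0
    exact ⟨f, hf⟩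
  obtain ⟨e, he⟩ := Set.Countable.exists_eq_range hc hne
  obtain ⟨f, hfD, hf⟩ := hD (fun n => (Finset.range (n + 1)).sup (fun k => e k n) + 1)
  rw [he] at hfD
  obtain ⟨k, rfl⟩ := hfD
  obtain ⟨N, hN⟩ := Filter.eventually_atTop.mp hf
  have h1 : (Finset.range (max N k + 1)).sup (fun j => e j (max N k)) + 1 ≤ e k (max N k) :=
    hN (max N k) (le_max_left _ _)
  have h2 : e k (max N k) ≤ (Finset.range (max N k + 1)).sup (fun j => e j (max N k)) :=
    Finset.le_sup (f := fun j => e j (max N k)) (Finset.mem_range.mpr (by omega))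
  omega

lemma aleph0_lt_dominatingNumber : Cardinal.aleph0 < dominatingNumber := by
  have hne : { c | ∃ D : Set (ℕ → ℕ),
      (∀ g : ℕ → ℕ, ∃ f ∈ D, ∀ᶠ n in Filter.atTop, g n ≤ f n) ∧ c = Cardinal.mk D }.Nonempty := by
    refine ⟨Cardinal.mk (Set.univ : Set (ℕ → ℕ)), Set.univ, fun g => ⟨g, mem_univ g, ?_⟩, rfl⟩
    exact Filter.Eventually.of_forall fun n => le_refl _
  have hmem := csInf_mem hne
  obtain ⟨D, hdom, heq⟩ := hmem
  rw [dominatingNumber, heq]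
  by_contra h
  push_neg at h
  exact dominating_uncountable D hdom ((Cardinal.mk_le_aleph0_iff.trans Set.countable_coe_iff).mp h)

theorem stmt_11 {X : Type*} [TopologicalSpace X]
    (hSSL : ∀ U : Set (Set X), IsOpenCover U →
      ∃ A : Set X, A.Countable ∧ starOf A U = Set.univ)
    {ι : Type v} (hι : Cardinal.lift.{0} (Cardinal.mk ι) < Cardinal.lift.{v} dominatingNumber)
    (S : ι → Set X) (hcov : ⋃ i, S i = Set.univ)
    (hH : ∀ i, Hurewicz (S i)) :
    StronglyStarScheepers X := by
  classical
  intro U hU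
  by_cases hX : IsEmpty X
  · exact ⟨fun _ => ∅, fun _ => finite_empty, fun G hG => ⟨0, fun x _ => (hX.false x).elim⟩⟩
  rw [not_isEmpty_iff] at hX
  -- countable cores from strong star-Lindelöfness
  choose A hAc hAstar using fun n => hSSL (U n) (hU n)
  have hAne : ∀ n, (A n).Nonempty := by
    intro n
    rcases Set.eq_empty_or_nonempty (A n) with h | h
    · exfalso
      have hst : starOf (A n) (U n) = ∅ := by
        rw [h]
        apply Set.eq_empty_of_forall_notMem
        rintro x ⟨s, ⟨-, a, ha, -⟩, -⟩
        exact ha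
      rw [hAstar n] at hst
      exact (hst ▸ mem_univ hX.some : hX.some ∈ (∅ : Set X))
    · exact h
  choose e he using fun n => Set.Countable.exists_eq_range (hAc n) (hAne n)
  -- covers of the subspaces
  set W : (i : ι) → ℕ → Set (Set (S i)) := fun i n =>
    {vv : Set (S i) | ∃ B, B ∈ U n ∧ (A n ∩ B).Nonempty ∧ vv = Subtype.val ⁻¹' B} with hWdef
  have hWcover : ∀ i n, IsOpenCover (W i n) := by
    intro i n
    constructor
    · rintro u ⟨B, hBU, -, rfl⟩
      exact ((hU n).1 B hBU).preimage continuous_subtype_val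
    · apply Set.eq_univ_of_forall
      intro y
      have : (y : X) ∈ starOf (A n) (U n) := (hAstar n) ▸ mem_univ _
      obtain ⟨B, ⟨hBU, hBne⟩, hyB⟩ := this
      exact ⟨Subtype.val ⁻¹' B, ⟨B, hBU, hBne, rfl⟩, hyB⟩
  choose V hVW hVev using fun i => hH i (W i) (hWcover i)
  -- the bounding functions
  have key : ∀ i n, ∃ K : ℕ, ∀ vv ∈ V i n,
      ∃ m ≤ K, ∃ B, B ∈ U n ∧ e n m ∈ B ∧ vv = Subtype.val ⁻¹' B := by
    intro i n
    have hP : ∀ vv ∈ V i n, ∃ m, ∃ B, B ∈ U n ∧ e n m ∈ B ∧ vv = Subtype.val ⁻¹' B := by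
      intro vv hvv
      obtain ⟨B, hBU, ⟨a, haA, haB⟩, rfl⟩ := (hVW i n).1 hvv
      rw [he n] at haA
      obtain ⟨m, rfl⟩ := haA
      exact ⟨m, B, hBU, haB, rfl⟩
    set μ : Set (S i) → ℕ := fun vv =>
      if hm : ∃ m, ∃ B, B ∈ U n ∧ e n m ∈ B ∧ vv = Subtype.val ⁻¹' B then hm.choose else 0
      with hμdef
    refine ⟨((hVW i n).2.toFinset).sup μ, fun vv hvv => ?_⟩
    have hm := hP vv hvv
    refine ⟨μ vv, ?_, ?_⟩
    · exact Finset.le_sup (((hVW i n).2.mem_toFinset).mpr hvv)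
    · simpa only [hμdef, dif_pos hm] using hm.choose_spec
  choose f hf using key
  -- eventual star membership
  have hstar : ∀ i, ∀ x : X, ∀ hx : x ∈ S i,
      ∀ᶠ n in Filter.atTop, x ∈ starOf (e n '' {m | m ≤ f i n}) (U n) := by
    intro i x hx
    refine (hVev i ⟨x, hx⟩).mono fun n hn => ?_
    obtain ⟨vv, hvvV, hxvv⟩ := hn
    obtain ⟨m, hmK, B, hBU, hmB, rfl⟩ := hf i n vv hvvV
    exact ⟨B, ⟨hBU, e n m, ⟨m, hmK, rfl⟩, hmB⟩, hxvv⟩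
  -- the family of finite suprema is not dominating
  set φ : Finset ι → (ℕ → ℕ) := fun E n => E.sup (fun i => f i n) with hφdef
  have hDlt : Cardinal.mk (Set.range φ) < dominatingNumber := by
    rw [← Cardinal.lift_lt.{0, v}]
    have h1 : Cardinal.lift.{v} (Cardinal.mk (Set.range φ)) ≤
        Cardinal.lift.{0} (Cardinal.mk (Finset ι)) := Cardinal.mk_range_le_lift
    have h2 : Cardinal.lift.{0} (Cardinal.mk (Finset ι)) < Cardinal.lift.{v} dominatingNumber := by
      rcases finite_or_infinite ι with hfin | hinf
      · haveI := Fintype.ofFinite ι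
        calc Cardinal.lift.{0} (Cardinal.mk (Finset ι)) < Cardinal.aleph0 := by
              rw [Cardinal.lift_lt_aleph0]
              exact Cardinal.lt_aleph0_of_finite (Finset ι)
          _ < Cardinal.lift.{v} dominatingNumber := by
              rw [← Cardinal.lift_aleph0.{v, 0}, Cardinal.lift_lt]
              exact aleph0_lt_dominatingNumber
      · rw [Cardinal.mk_finset_of_infinite]
        exact hι
    exact lt_of_le_of_lt h1 h2
  have hnotdom : ¬ ∀ g : ℕ → ℕ, ∃ h ∈ Set.range φ, ∀ᶠ n in Filter.atTop, g n ≤ h n := by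
    intro hdom
    have : dominatingNumber ≤ Cardinal.mk (Set.range φ) :=
      csInf_le (OrderBot.bddBelow _) ⟨Set.range φ, hdom, rfl⟩
    exact absurd hDlt (not_lt.mpr this)
  push_neg at hnotdom
  obtain ⟨g, hg⟩ := hnotdom
  -- the witnessing finite sets
  refine ⟨fun n => e n '' {m | m ≤ g n}, fun n => (Set.finite_Iic (g n)).image _, ?_⟩
  intro G hG
  have hmem : ∀ x : X, ∃ i, x ∈ S i := fun x => mem_iUnion.mp (hcov ▸ mem_univ x)
  choose σ hσ using hmem
  set E : Finset ι := hG.toFinset.image σ with hEdef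
  have hfreq : ∃ᶠ n in Filter.atTop, ¬ g n ≤ φ E n :=
    (hg (φ E) ⟨E, rfl⟩).mono fun _ h => not_le.mpr h
  have hev : ∀ᶠ n in Filter.atTop, ∀ x ∈ G, x ∈ starOf (e n '' {m | m ≤ f (σ x) n}) (U n) :=
    hG.eventually_all.mpr fun x _ => hstar (σ x) x (hσ x)
  obtain ⟨n, hn1, hn2⟩ := (hfreq.and_eventually hev).exists
  refine ⟨n, fun x hx => ?_⟩
  have hle : f (σ x) n ≤ g n := by
    have h1 : f (σ x) n ≤ φ E n := by
      show f (σ x) n ≤ E.sup (fun i => f i n)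
      exact Finset.le_sup (f := fun i => f i n)
        (Finset.mem_image.mpr ⟨x, hG.mem_toFinset.mpr hx, rfl⟩)
    exact le_trans h1 (le_of_lt (not_le.mp hn1))
  refine starOf_mono (Set.image_mono ?_) (U n) (hn2 x hx)
  intro m hm
  exact le_trans hm hle
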